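/- arXiv:2404.02513 — 4 statements merged into one kernel-verified Lean document; each statement's English description precedes it below -/
import Mathlib

section
/- Let α > 0 and β > −1, and for ν ∈ (0,1) and t ∈ (0,1] define φ_β(ν,t) = Σ_{l₁,l₂ ≥ 1} ((1 − e^{−2 ν t λ_{l₁,l₂}})/(2 ν λ_{l₁,l₂})) μ_{l₁,l₂}^{−α(β+1)}. Then this series converges, and for all ν ∈ (0,1) and 0 < t₁ ≤ t₂ ≤ 1 one has φ_β(ν,t₁) ≤ φ_β(ν,t₂) ≤ (t₂/t₁) φ_β(ν,t₁). -/
/-!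
With `s = α(β + 1) > 0`, each term of `φ_β(ν, ·)` is `μ^{-s} / (2νλ)` times `1 - e^{-2νλt}`,
a nondecreasing concave function of `t` vanishing at `0`; hence `φ_β(ν, ·)` is nondecreasing and
`φ_β(ν, ct) ≤ c φ_β(ν, t)` for `c ≥ 1` (Bernoulli's inequality applied to `e^{-2νλt}`).
Convergence comes from `λ ≥ μ ≥ 2π² l₁ l₂`, which bounds the terms by a multiple of
`(l₁ l₂)^{-(s+1)}`.
-/

/-- `μ_{l₁,l₂} = π² (l₁² + l₂²)`. -/
noncomputable def muP (l : ℕ+ × ℕ+) : ℝ :=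
  Real.pi ^ 2 * (((l.1 : ℕ) : ℝ) ^ 2 + ((l.2 : ℕ) : ℝ) ^ 2)

/-- `λ_{l₁,l₂} = π² (l₁² + l₂²) + (κ² + η²)/4`. -/
noncomputable def lamP (κ η : ℝ) (l : ℕ+ × ℕ+) : ℝ := muP l + (κ ^ 2 + η ^ 2) / 4

/-- `φ_β(ν,t) = Σ_{l₁,l₂ ≥ 1} ((1 − e^{−2νtλ})/(2νλ)) μ^{−α(β+1)}`. -/
noncomputable def phiBt (κ η α β ν t : ℝ) : ℝ :=
  ∑' l : ℕ+ × ℕ+,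
    (1 - Real.exp (-2 * ν * t * lamP κ η l)) / (2 * ν * lamP κ η l) * muP l ^ (-(α * (β + 1)))

open Real

lemma one_sub_exp_mul_le {c : ℝ} (hc : 1 ≤ c) (x : ℝ) : 1 - exp (c * x) ≤ c * (1 - exp x) := by
  have hbern := one_add_mul_self_le_rpow_one_add (s := exp x - 1)
    (by linarith [exp_pos x]) hc
  rw [add_sub_cancel, ← exp_mul, mul_comm x] at hbern
  linarith

lemma muP_pos (l : ℕ+ × ℕ+) : 0 < muP l := by
  unfold muP
  have := pi_pos
  positivity

lemma muP_le_lamP (κ η : ℝ) (l : ℕ+ × ℕ+) : muP l ≤ lamP κ η l := by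
  unfold lamP
  nlinarith [sq_nonneg κ, sq_nonneg η]

lemma lamP_pos (κ η : ℝ) (l : ℕ+ × ℕ+) : 0 < lamP κ η l :=
  (muP_pos l).trans_le (muP_le_lamP κ η l)

lemma two_pi_sq_mul_le_muP (l : ℕ+ × ℕ+) :
    π ^ 2 * (2 * (((l.1 : ℕ) : ℝ) * ((l.2 : ℕ) : ℝ))) ≤ muP l := by
  unfold muP
  gcongr
  nlinarith [sq_nonneg (((l.1 : ℕ) : ℝ) - ((l.2 : ℕ) : ℝ))]

lemma summable_muP_rpow_neg {p : ℝ} (hp : 1 < p) :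
    Summable fun l : ℕ+ × ℕ+ => muP l ^ (-p) := by
  have hpnat : Summable fun n : ℕ+ => ((n : ℕ) : ℝ) ^ (-p) :=
    (summable_nat_rpow.mpr (by linarith)).comp_injective PNat.coe_injective
  have hprod : Summable fun l : ℕ+ × ℕ+ => ((l.1 : ℕ) : ℝ) ^ (-p) * ((l.2 : ℕ) : ℝ) ^ (-p) :=
    hpnat.mul_of_nonneg hpnat (fun _ => by positivity) (fun _ => by positivity)
  refine (hprod.mul_left ((π ^ 2 * 2) ^ (-p))).of_nonneg_of_le
    (fun l => rpow_nonneg (muP_pos l).le _) fun l => ?_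
  calc muP l ^ (-p)
      ≤ (π ^ 2 * (2 * (((l.1 : ℕ) : ℝ) * ((l.2 : ℕ) : ℝ)))) ^ (-p) :=
        rpow_le_rpow_of_nonpos (by have := pi_pos; positivity) (two_pi_sq_mul_le_muP l)
          (by linarith)
    _ = (π ^ 2 * 2) ^ (-p) * (((l.1 : ℕ) : ℝ) ^ (-p) * ((l.2 : ℕ) : ℝ) ^ (-p)) := by
        rw [← mul_assoc, mul_rpow (by positivity) (by positivity),
          mul_rpow (by positivity) (by positivity), mul_rpow (by positivity) (by positivity)]

noncomputable def phiTerm (κ η s ν t : ℝ) (l : ℕ+ × ℕ+) : ℝ :=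
  (1 - exp (-2 * ν * t * lamP κ η l)) / (2 * ν * lamP κ η l) * muP l ^ (-s)

section phiTerm

variable {κ η s ν t t₁ t₂ : ℝ}

lemma phiTerm_nonneg (hν : 0 < ν) (ht : 0 ≤ t) (l : ℕ+ × ℕ+) : 0 ≤ phiTerm κ η s ν t l := by
  have hlam := lamP_pos κ η l
  have hexp : exp (-2 * ν * t * lamP κ η l) ≤ 1 :=
    exp_le_one_iff.mpr (by nlinarith [mul_nonneg (mul_nonneg hν.le ht) hlam.le])
  unfold phiTerm
  have := muP_pos l
  exact mul_nonneg (div_nonneg (by linarith) (by positivity)) (by positivity)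

lemma phiTerm_le (hν : 0 < ν) (l : ℕ+ × ℕ+) :
    phiTerm κ η s ν t l ≤ (2 * ν)⁻¹ * muP l ^ (-(s + 1)) := by
  have hμ := muP_pos l
  have hμs : 0 ≤ muP l ^ (-s) := by positivity
  calc phiTerm κ η s ν t l
      ≤ 1 / (2 * ν * lamP κ η l) * muP l ^ (-s) := by
        unfold phiTerm
        gcongr
        · exact (mul_pos (by positivity) (lamP_pos κ η l)).le
        · linarith [exp_pos (-2 * ν * t * lamP κ η l)]
    _ ≤ 1 / (2 * ν * muP l) * muP l ^ (-s) := by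
        gcongr
        exact muP_le_lamP κ η l
    _ = (2 * ν)⁻¹ * muP l ^ (-(s + 1)) := by
        rw [neg_add, rpow_add hμ, rpow_neg_one]
        field_simp

lemma summable_phiTerm (hs : 0 < s) (hν : 0 < ν) (ht : 0 ≤ t) :
    Summable (phiTerm κ η s ν t) :=
  ((summable_muP_rpow_neg (by linarith : 1 < s + 1)).mul_left _).of_nonneg_of_le
    (phiTerm_nonneg hν ht) fun l => phiTerm_le hν l

lemma phiTerm_mono (hν : 0 < ν) (h : t₁ ≤ t₂) (l : ℕ+ × ℕ+) :
    phiTerm κ η s ν t₁ l ≤ phiTerm κ η s ν t₂ l := by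
  have hlam := lamP_pos κ η l
  have hexp : exp (-2 * ν * t₂ * lamP κ η l) ≤ exp (-2 * ν * t₁ * lamP κ η l) :=
    exp_le_exp.mpr (by nlinarith [mul_pos hν hlam])
  unfold phiTerm
  have := muP_pos l
  gcongr

lemma phiTerm_le_div_mul (hν : 0 < ν) (ht₁ : 0 < t₁) (h : t₁ ≤ t₂) (l : ℕ+ × ℕ+) :
    phiTerm κ η s ν t₂ l ≤ t₂ / t₁ * phiTerm κ η s ν t₁ l := by
  have hexp : -2 * ν * t₂ * lamP κ η l = t₂ / t₁ * (-2 * ν * t₁ * lamP κ η l) := by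
    field_simp
  have hnum := one_sub_exp_mul_le ((one_le_div ht₁).mpr h) (-2 * ν * t₁ * lamP κ η l)
  rw [← hexp] at hnum
  have := lamP_pos κ η l
  have := muP_pos l
  calc phiTerm κ η s ν t₂ l
      ≤ t₂ / t₁ * (1 - exp (-2 * ν * t₁ * lamP κ η l)) / (2 * ν * lamP κ η l) * muP l ^ (-s) := by
        unfold phiTerm
        gcongr
    _ = t₂ / t₁ * phiTerm κ η s ν t₁ l := by
        unfold phiTerm
        ring

end phiTerm

theorem stmt7 (κ η α β : ℝ) (hα : 0 < α) (hβ : -1 < β) :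
    (∀ ν : ℝ, 0 < ν → ν < 1 → ∀ t : ℝ, 0 < t → t ≤ 1 →
      Summable fun l : ℕ+ × ℕ+ =>
        (1 - Real.exp (-2 * ν * t * lamP κ η l)) / (2 * ν * lamP κ η l) *
          muP l ^ (-(α * (β + 1))))
    ∧ ∀ ν : ℝ, 0 < ν → ν < 1 → ∀ t₁ t₂ : ℝ, 0 < t₁ → t₁ ≤ t₂ → t₂ ≤ 1 →
        phiBt κ η α β ν t₁ ≤ phiBt κ η α β ν t₂ ∧
        phiBt κ η α β ν t₂ ≤ t₂ / t₁ * phiBt κ η α β ν t₁ := by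
  have hs : 0 < α * (β + 1) := mul_pos hα (by linarith)
  refine ⟨fun ν hν _ t ht _ => summable_phiTerm hs hν ht.le,
    fun ν hν _ t₁ t₂ ht₁ h12 _ => ?_⟩
  have hsum₁ : Summable (phiTerm κ η _ ν t₁) := summable_phiTerm hs hν ht₁.le
  have hsum₂ : Summable (phiTerm κ η _ ν t₂) := summable_phiTerm hs hν (ht₁.le.trans h12)
  refine ⟨hsum₁.tsum_le_tsum (phiTerm_mono hν h12) hsum₂, ?_⟩
  rw [phiBt, phiBt, ← tsum_mul_left]
  exact hsum₂.tsum_le_tsum (phiTerm_le_div_mul hν ht₁ h12) (hsum₁.mul_left _)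
end

section
/- For every s > 0 there exists a constant C > 0 such that for all u ∈ (0,1]: Σ_{l₁,l₂ ≥ 1} e^{−u(l₁²+l₂²)} (l₁²+l₂²)^{−s} ≤ C·g(u), where g(u) = u^{s−1} if s < 1, g(u) = 1 − log u if s = 1, and g(u) = 1 if s > 1. -/
/-!
Write `θ_a(u) = ∑_{n ≥ 1} n^(-a) e^(-u n²)` (its terms are `thetaTerm a u n`).

For `s < 1`, the inequality `l₁² + l₂² ≥ 2 l₁ l₂` bounds the double sum by `2^(-s) θ_s(u)²`.
For `0 ≤ a < 1` the summand of `θ_a(u)` is decreasing in `n`, so `θ_a(u)` is at most its first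
term plus the Gamma integral `∫₀^∞ x^(-a) e^(-u x²) dx = Γ((1-a)/2) u^((a-1)/2) / 2`.

For `s ≥ 1`, drop `l₂²` from the terms with `l₂ ≤ l₁` (and symmetrically); for fixed `l₁` there
are `l₁` of them, so the double sum is at most `2 θ_{2s-1}(u)`. For `s > 1` this is at
most `2 ζ(2s-1)`. For `s = 1`, split `θ_1(u)` at `N = ⌈u^(-1/2)⌉`: the head is at most the
harmonic number `H_N ≤ 1 + log N`, and the tail is at most `θ_0(u) / N = O(1)`.
-/

open Real Set MeasureTheory

noncomputable def thetaTerm (a u : ℝ) (n : ℕ+) : ℝ :=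
  ((n : ℕ) : ℝ) ^ (-a) * exp (-u * ((n : ℕ) : ℝ) ^ 2)

noncomputable def latticeTerm (s u : ℝ) (l : ℕ+ × ℕ+) : ℝ :=
  exp (-u * (((l.1 : ℕ) : ℝ) ^ 2 + ((l.2 : ℕ) : ℝ) ^ 2)) *
    (((l.1 : ℕ) : ℝ) ^ 2 + ((l.2 : ℕ) : ℝ) ^ 2) ^ (-s)

theorem summable_and_tsum_le_mul_sq {ι : Type*} {F : ι × ι → ℝ} {f : ι → ℝ} {c : ℝ}
    (hF : ∀ l, 0 ≤ F l) (hf : ∀ i, 0 ≤ f i) (hfs : Summable f)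
    (hFf : ∀ l, F l ≤ c * (f l.1 * f l.2)) :
    Summable F ∧ ∑' l, F l ≤ c * (∑' i, f i) ^ 2 := by
  have hprod : Summable fun l : ι × ι => f l.1 * f l.2 := hfs.mul_of_nonneg hfs hf hf
  have hFs : Summable F := (hprod.mul_left c).of_nonneg_of_le hF hFf
  refine ⟨hFs, ?_⟩
  calc ∑' l, F l ≤ ∑' l : ι × ι, c * (f l.1 * f l.2) := hFs.tsum_le_tsum hFf (hprod.mul_left c)
    _ = c * (∑' i, f i) ^ 2 := by rw [tsum_mul_left, ← hfs.tsum_mul_tsum hfs hprod, sq]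

theorem PNat.hasSum_ite_le (c : ℝ) (n : ℕ+) :
    HasSum (fun m : ℕ+ => if m ≤ n then c else 0) (((n : ℕ) : ℝ) * c) := by
  have hsupp : ∀ m ∉ Finset.Icc 1 n, (if m ≤ n then c else 0) = 0 :=
    fun m hm => if_neg fun h => hm (Finset.mem_Icc.mpr ⟨(one_le : 1 ≤ m), h⟩)
  have hsum : HasSum (fun m : ℕ+ => if m ≤ n then c else 0) _ :=
    hasSum_sum_of_ne_finset_zero hsupp
  convert hsum using 1
  rw [Finset.sum_congr rfl fun m hm => if_pos (Finset.mem_Icc.mp hm).2, Finset.sum_const,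
    PNat.card_Icc, nsmul_eq_mul]
  simp

theorem summable_and_tsum_le_two_mul_of_swap {F : ℕ+ × ℕ+ → ℝ} {g : ℕ+ → ℝ}
    (hF : ∀ l, 0 ≤ F l) (hg : ∀ n, 0 ≤ g n) (hswap : ∀ l, F l.swap = F l)
    (hFg : ∀ l : ℕ+ × ℕ+, l.2 ≤ l.1 → F l ≤ g l.1)
    (hgs : Summable fun n : ℕ+ => ((n : ℕ) : ℝ) * g n) :
    Summable F ∧ ∑' l, F l ≤ 2 * ∑' n : ℕ+, ((n : ℕ) : ℝ) * g n := by
  let G : ℕ+ × ℕ+ → ℝ := fun l => if l.2 ≤ l.1 then g l.1 else 0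
  have hrow : ∀ n, HasSum (fun m => G (n, m)) (((n : ℕ) : ℝ) * g n) :=
    fun n => PNat.hasSum_ite_le (g n) n
  have hG0 : ∀ l, 0 ≤ G l := fun l => by
    by_cases h : l.2 ≤ l.1
    · exact (if_pos h).trans_ge (hg _)
    · exact (if_neg h).symm.le
  have hGs : Summable G := (summable_prod_of_nonneg (f := G) hG0).mpr
    ⟨fun n => (hrow n).summable, by simpa only [(hrow _).tsum_eq] using hgs⟩
  have hGsum : ∑' l, G l = ∑' n : ℕ+, ((n : ℕ) : ℝ) * g n := by
    rw [hGs.tsum_prod' fun n => (hrow n).summable]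
    exact tsum_congr fun n => (hrow n).tsum_eq
  have hGswap : Summable fun l : ℕ+ × ℕ+ => G l.swap := hGs.comp_injective Prod.swap_injective
  have hFG : ∀ l, F l ≤ G l + G l.swap := by
    intro l
    rcases le_total l.2 l.1 with h | h
    · have hGl : G l = g l.1 := if_pos h
      linarith [hFg l h, hG0 l.swap]
    · have hGl : G l.swap = g l.2 := if_pos h
      have hFl : F l ≤ g l.2 := (hswap l).ge.trans (hFg l.swap h)
      linarith [hG0 l]
  have hFs : Summable F := (hGs.add hGswap).of_nonneg_of_le hF hFG
  refine ⟨hFs, ?_⟩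
  calc ∑' l, F l ≤ ∑' l, (G l + G l.swap) := hFs.tsum_le_tsum hFG (hGs.add hGswap)
    _ = 2 * ∑' n : ℕ+, ((n : ℕ) : ℝ) * g n := by
      have hswapsum : ∑' l : ℕ+ × ℕ+, G l.swap = ∑' l, G l := (Equiv.prodComm ℕ+ ℕ+).tsum_eq G
      rw [hGs.tsum_add hGswap, hswapsum, hGsum]
      ring

theorem tsum_pnat_le_add_integral {f : ℝ → ℝ} (hf : AntitoneOn f (Ioi 0))
    (hf0 : ∀ x, 0 < x → 0 ≤ f x) (hint : IntegrableOn f (Ioi 0)) :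
    ∑' n : ℕ+, f ((n : ℕ) : ℝ) ≤ f 1 + ∫ x in Ioi 0, f x := by
  have hI0 : 0 ≤ ∫ x in Ioi 0, f x := setIntegral_nonneg measurableSet_Ioi hf0
  rw [tsum_pnat_eq_tsum_succ (f := fun n : ℕ => f n)]
  refine Real.tsum_le_of_sum_range_le (fun n => hf0 _ (by positivity)) fun M => ?_
  rcases M with _ | M
  · simpa using add_nonneg (hf0 1 one_pos) hI0
  have hhead : ∑ i ∈ Finset.range M, f (1 + ((i + 1 : ℕ) : ℝ)) ≤ ∫ x in (1 : ℝ)..1 + M, f x :=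
    (hf.mono fun x hx => lt_of_lt_of_le one_pos hx.1).sum_le_integral
  have htail : ∫ x in (1 : ℝ)..1 + M, f x ≤ ∫ x in Ioi 0, f x := by
    rw [intervalIntegral.integral_of_le (le_add_of_nonneg_right M.cast_nonneg)]
    exact setIntegral_mono_set hint ((ae_restrict_iff' measurableSet_Ioi).mpr (.of_forall hf0))
      (.of_forall fun x hx => lt_of_lt_of_le one_pos hx.1.le)
  have hshift : ∀ i : ℕ, f ((i + 1 + 1 : ℕ) : ℝ) = f (1 + ((i + 1 : ℕ) : ℝ)) :=
    fun i => by push_cast; ring_nf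
  rw [Finset.sum_range_succ']
  simp only [hshift, zero_add, Nat.cast_one]
  linarith

theorem hasSum_ite_le_inv_harmonic (N : ℕ) :
    HasSum (fun n : ℕ+ => if (n : ℕ) ≤ N then ((n : ℕ) : ℝ)⁻¹ else 0) (harmonic N) := by
  refine (hasSum_pnat_iff_hasSum_succ (f := fun n : ℕ => if n ≤ N then (n : ℝ)⁻¹ else 0)).mpr ?_
  have hsupp : ∀ n ∉ Finset.range N, (if n + 1 ≤ N then ((n + 1 : ℕ) : ℝ)⁻¹ else 0) = 0 :=
    fun n hn => if_neg (by rw [Finset.mem_range, not_lt] at hn; omega)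
  have hfin : HasSum (fun n : ℕ => if n + 1 ≤ N then ((n + 1 : ℕ) : ℝ)⁻¹ else 0) _ :=
    hasSum_sum_of_ne_finset_zero hsupp
  convert hfin using 1
  rw [harmonic, Rat.cast_sum]
  refine Finset.sum_congr rfl fun n hn => ?_
  rw [if_pos (Finset.mem_range.mp hn).nat_succ_le]
  push_cast
  rfl

theorem exp_mul_rpow_add_sq_le_two_rpow_mul {u s x y : ℝ} (hs : 0 ≤ s) (hx : 0 < x) (hy : 0 < y) :
    exp (-u * (x ^ 2 + y ^ 2)) * (x ^ 2 + y ^ 2) ^ (-s) ≤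
      2 ^ (-s) * (x ^ (-s) * exp (-u * x ^ 2) * (y ^ (-s) * exp (-u * y ^ 2))) := by
  have hxy : (x ^ 2 + y ^ 2) ^ (-s) ≤ 2 ^ (-s) * (x ^ (-s) * y ^ (-s)) := by
    rw [← mul_rpow hx.le hy.le, ← mul_rpow zero_le_two (by positivity)]
    exact rpow_le_rpow_of_nonpos (by positivity) (by nlinarith [sq_nonneg (x - y)])
      (neg_nonpos.mpr hs)
  calc exp (-u * (x ^ 2 + y ^ 2)) * (x ^ 2 + y ^ 2) ^ (-s)
      = exp (-u * x ^ 2) * exp (-u * y ^ 2) * (x ^ 2 + y ^ 2) ^ (-s) := by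
        rw [← exp_add, mul_add]
    _ ≤ exp (-u * x ^ 2) * exp (-u * y ^ 2) * (2 ^ (-s) * (x ^ (-s) * y ^ (-s))) := by gcongr
    _ = 2 ^ (-s) * (x ^ (-s) * exp (-u * x ^ 2) * (y ^ (-s) * exp (-u * y ^ 2))) := by ring

theorem exp_mul_rpow_add_sq_le {u s x y : ℝ} (hu : 0 ≤ u) (hs : 0 ≤ s) (hx : 0 < x) :
    exp (-u * (x ^ 2 + y ^ 2)) * (x ^ 2 + y ^ 2) ^ (-s) ≤ (x ^ 2) ^ (-s) * exp (-u * x ^ 2) := by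
  rw [mul_comm]
  gcongr ?_ * ?_
  · exact rpow_le_rpow_of_nonpos (by positivity) (by nlinarith [sq_nonneg y]) (neg_nonpos.mpr hs)
  · exact exp_le_exp.mpr (by nlinarith [sq_nonneg y])

theorem thetaTerm_nonneg (a u : ℝ) (n : ℕ+) : 0 ≤ thetaTerm a u n := by
  unfold thetaTerm; positivity

theorem latticeTerm_nonneg (s u : ℝ) (l : ℕ+ × ℕ+) : 0 ≤ latticeTerm s u l := by
  unfold latticeTerm; positivity

theorem thetaTerm_anti {a u v : ℝ} (huv : u ≤ v) (n : ℕ+) : thetaTerm a v n ≤ thetaTerm a u n := by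
  unfold thetaTerm
  gcongr

theorem summable_thetaTerm {u : ℝ} (hu : 0 < u) (a : ℝ) : Summable (thetaTerm a u) := by
  have hmaj : Summable fun n : ℕ => (n : ℝ) ^ ⌈-a⌉₊ * exp (-u * n) :=
    summable_pow_mul_exp_neg_nat_mul _ hu
  refine (hmaj.comp_injective PNat.coe_injective).of_nonneg_of_le (thetaTerm_nonneg a u)
    fun n => ?_
  have hn : (1 : ℝ) ≤ ((n : ℕ) : ℝ) := by exact_mod_cast n.pos
  unfold thetaTerm
  simp only [Function.comp_apply]
  gcongr ?_ * ?_
  · rw [← rpow_natCast]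
    exact rpow_le_rpow_of_exponent_le hn (by linarith [Nat.le_ceil (-a)])
  · exact exp_le_exp.mpr (by nlinarith [mul_le_mul_of_nonneg_left hn hu.le])

theorem summable_thetaTerm_zero {a : ℝ} (ha : 1 < a) : Summable (thetaTerm a 0) := by
  have hzeta : Summable fun n : ℕ => (n : ℝ) ^ (-a) := Real.summable_nat_rpow.mpr (by linarith)
  refine (hzeta.comp_injective PNat.coe_injective).congr fun n => ?_
  simp [thetaTerm]

theorem summable_latticeTerm_and_tsum_le_sq {s u : ℝ} (hs : 0 ≤ s) (hu : 0 < u) :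
    Summable (latticeTerm s u) ∧
      ∑' l, latticeTerm s u l ≤ 2 ^ (-s) * (∑' n, thetaTerm s u n) ^ 2 :=
  summable_and_tsum_le_mul_sq (latticeTerm_nonneg s u) (thetaTerm_nonneg s u)
    (summable_thetaTerm hu s) fun l =>
      exp_mul_rpow_add_sq_le_two_rpow_mul hs (by positivity) (by positivity)

theorem summable_latticeTerm_and_tsum_le_two_mul {s u : ℝ} (hs : 0 ≤ s) (hu : 0 < u) :
    Summable (latticeTerm s u) ∧
      ∑' l, latticeTerm s u l ≤ 2 * ∑' n, thetaTerm (2 * s - 1) u n := by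
  have hweight : ∀ n : ℕ+, ((n : ℕ) : ℝ) * ((((n : ℕ) : ℝ) ^ 2) ^ (-s) *
      exp (-u * ((n : ℕ) : ℝ) ^ 2)) = thetaTerm (2 * s - 1) u n := fun n => by
    have hn : (0 : ℝ) < ((n : ℕ) : ℝ) := by positivity
    rw [thetaTerm, show -(2 * s - 1) = 1 + 2 * -s by ring, rpow_add hn, rpow_one, rpow_mul hn.le,
      rpow_two, mul_assoc]
  simp only [← hweight]
  refine summable_and_tsum_le_two_mul_of_swap (latticeTerm_nonneg s u)
    (fun n => by positivity)
    (fun l => by simp only [latticeTerm, Prod.fst_swap, Prod.snd_swap, add_comm])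
    (fun l _ => exp_mul_rpow_add_sq_le hu.le hs (by positivity))
    (by simpa only [hweight] using summable_thetaTerm hu (2 * s - 1))

theorem tsum_thetaTerm_le_rpow {a u : ℝ} (ha0 : 0 ≤ a) (ha1 : a < 1) (hu : 0 < u) (hu1 : u ≤ 1) :
    ∑' n, thetaTerm a u n ≤ (1 + Gamma ((1 - a) / 2) / 2) * u ^ ((a - 1) / 2) := by
  set f : ℝ → ℝ := fun x => x ^ (-a) * exp (-u * x ^ 2)
  have hanti : AntitoneOn f (Ioi 0) := fun x hx y _ hxy =>
    mul_le_mul (rpow_le_rpow_of_nonpos hx hxy (neg_nonpos.mpr ha0))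
      (exp_le_exp.mpr
        (by nlinarith [mul_le_mul_of_nonneg_left (pow_le_pow_left₀ hx.le hxy 2) hu.le]))
      (exp_pos _).le (rpow_nonneg hx.le _)
  have hint : IntegrableOn f (Ioi 0) := integrableOn_rpow_mul_exp_neg_mul_sq hu (by linarith)
  have hintegral : ∫ x in Ioi 0, f x = u ^ ((a - 1) / 2) * (1 / 2) * Gamma ((1 - a) / 2) := by
    have h := integral_rpow_mul_exp_neg_mul_rpow two_pos (q := -a) (by linarith) hu
    simp only [rpow_two] at h
    rw [h]
    congr 3 <;> ring
  have hf1 : f 1 ≤ u ^ ((a - 1) / 2) := by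
    calc f 1 ≤ 1 := by simpa [f] using hu.le
      _ ≤ u ^ ((a - 1) / 2) := one_le_rpow_of_pos_of_le_one_of_nonpos hu hu1 (by linarith)
  calc ∑' n, thetaTerm a u n = ∑' n : ℕ+, f ((n : ℕ) : ℝ) := rfl
    _ ≤ f 1 + ∫ x in Ioi 0, f x :=
      tsum_pnat_le_add_integral hanti (fun x _ => by positivity) hint
    _ ≤ (1 + Gamma ((1 - a) / 2) / 2) * u ^ ((a - 1) / 2) := by
      rw [hintegral]
      linarith

theorem tsum_thetaTerm_one_le {u : ℝ} (hu : 0 < u) (hu1 : u ≤ 1) :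
    ∑' n, thetaTerm 1 u n ≤ (2 + log 2 + Gamma (1 / 2) / 2) * (1 - log u) := by
  set v := u ^ (-(1 / 2) : ℝ)
  set N := ⌈v⌉₊
  have hv1 : 1 ≤ v := one_le_rpow_of_pos_of_le_one_of_nonpos hu hu1 (by norm_num)
  have hvN : v ≤ N := Nat.le_ceil v
  have hNv : (N : ℝ) ≤ 2 * v := by linarith [Nat.ceil_lt_add_one (zero_le_one.trans hv1)]
  have hN : (0 : ℝ) < N := by linarith
  have hsplit : ∀ n, thetaTerm 1 u n ≤
      (if (n : ℕ) ≤ N then ((n : ℕ) : ℝ)⁻¹ else 0) + (N : ℝ)⁻¹ * thetaTerm 0 u n := by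
    intro n
    have hn : (0 : ℝ) < ((n : ℕ) : ℝ) := by positivity
    have hexp : exp (-u * ((n : ℕ) : ℝ) ^ 2) ≤ 1 := exp_le_one_iff.mpr (by nlinarith)
    simp only [thetaTerm, rpow_neg_one, neg_zero, rpow_zero, one_mul]
    split_ifs with h
    · nlinarith [inv_pos.mpr hn, inv_pos.mpr hN, exp_pos (-u * ((n : ℕ) : ℝ) ^ 2)]
    · have hnN : ((n : ℕ) : ℝ)⁻¹ ≤ (N : ℝ)⁻¹ :=
        inv_anti₀ hN (by exact_mod_cast (not_le.mp h).le)
      nlinarith [exp_pos (-u * ((n : ℕ) : ℝ) ^ 2)]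
  have hharm := hasSum_ite_le_inv_harmonic N
  have hθ0 : ∑' n, thetaTerm 0 u n ≤ (1 + Gamma (1 / 2) / 2) * v := by
    have h := tsum_thetaTerm_le_rpow le_rfl one_pos hu hu1
    rwa [show ((0 : ℝ) - 1) / 2 = -(1 / 2) by norm_num, sub_zero] at h
  have hlogN : log N ≤ log 2 - log u / 2 := by
    calc log N ≤ log (2 * v) := log_le_log hN hNv
      _ = log 2 - log u / 2 := by rw [log_mul two_ne_zero (by positivity), log_rpow hu]; ring
  have hlogu : log u ≤ 0 := log_nonpos hu.le hu1
  have hΓ : 0 < Gamma (1 / 2) := by positivity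
  calc ∑' n, thetaTerm 1 u n
      ≤ ∑' n : ℕ+, ((if (n : ℕ) ≤ N then ((n : ℕ) : ℝ)⁻¹ else 0) + (N : ℝ)⁻¹ * thetaTerm 0 u n) :=
        (summable_thetaTerm hu 1).tsum_le_tsum hsplit
          (hharm.summable.add ((summable_thetaTerm hu 0).mul_left _))
    _ = harmonic N + (N : ℝ)⁻¹ * ∑' n, thetaTerm 0 u n := by
        rw [hharm.summable.tsum_add ((summable_thetaTerm hu 0).mul_left _), hharm.tsum_eq,
          tsum_mul_left]
    _ ≤ (1 + log N) + (N : ℝ)⁻¹ * ((1 + Gamma (1 / 2) / 2) * v) := by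
        gcongr
        exact harmonic_le_one_add_log N
    _ ≤ (1 + (log 2 - log u / 2)) + (1 + Gamma (1 / 2) / 2) := by
        gcongr
        rw [mul_left_comm]
        exact mul_le_of_le_one_right (by positivity) (inv_mul_le_one_of_le₀ hvN hN.le)
    _ ≤ (2 + log 2 + Gamma (1 / 2) / 2) * (1 - log u) := by
        nlinarith [log_nonneg one_le_two]

theorem stmt11 (s : ℝ) (hs : 0 < s) :
    ∃ C : ℝ, 0 < C ∧ ∀ u : ℝ, 0 < u → u ≤ 1 →
      (Summable fun l : ℕ+ × ℕ+ =>
        Real.exp (-u * (((l.1 : ℕ) : ℝ) ^ 2 + ((l.2 : ℕ) : ℝ) ^ 2)) *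
          (((l.1 : ℕ) : ℝ) ^ 2 + ((l.2 : ℕ) : ℝ) ^ 2) ^ (-s)) ∧
      (∑' l : ℕ+ × ℕ+,
          Real.exp (-u * (((l.1 : ℕ) : ℝ) ^ 2 + ((l.2 : ℕ) : ℝ) ^ 2)) *
            (((l.1 : ℕ) : ℝ) ^ 2 + ((l.2 : ℕ) : ℝ) ^ 2) ^ (-s))
        ≤ C * (if s < 1 then u ^ (s - 1) else if s = 1 then 1 - Real.log u else 1) := by
  rcases lt_trichotomy s 1 with hlt | rfl | hgt
  · set K := 1 + Gamma ((1 - s) / 2) / 2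
    refine ⟨2 ^ (-s) * K ^ 2, by positivity, fun u hu hu1 => ?_⟩
    obtain ⟨hsum, hle⟩ := summable_latticeTerm_and_tsum_le_sq hs.le hu
    refine ⟨hsum, hle.trans ?_⟩
    have hθ := tsum_thetaTerm_le_rpow hs.le hlt hu hu1
    calc 2 ^ (-s) * (∑' n, thetaTerm s u n) ^ 2 ≤ 2 ^ (-s) * (K * u ^ ((s - 1) / 2)) ^ 2 := by
          gcongr
          exact tsum_nonneg (thetaTerm_nonneg s u)
      _ = 2 ^ (-s) * K ^ 2 * u ^ (s - 1) := by
          rw [mul_pow, ← rpow_natCast (u ^ _), ← rpow_mul hu.le]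
          norm_num
          ring
      _ = _ := by rw [if_pos hlt]
  · refine ⟨2 * (2 + log 2 + Gamma (1 / 2) / 2), by positivity, fun u hu hu1 => ?_⟩
    obtain ⟨hsum, hle⟩ := summable_latticeTerm_and_tsum_le_two_mul zero_le_one hu
    rw [show 2 * (1 : ℝ) - 1 = 1 by norm_num] at hle
    refine ⟨hsum, ?_⟩
    rw [if_neg (lt_irrefl 1), if_pos rfl, mul_assoc]
    exact hle.trans (by gcongr; exact tsum_thetaTerm_one_le hu hu1)
  · have hζ := summable_thetaTerm_zero (a := 2 * s - 1) (by linarith)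
    refine ⟨2 * ∑' n, thetaTerm (2 * s - 1) 0 n,
      mul_pos two_pos (hζ.tsum_pos (thetaTerm_nonneg _ 0) 1 (by simp [thetaTerm])),
      fun u hu _ => ?_⟩
    obtain ⟨hsum, hle⟩ := summable_latticeTerm_and_tsum_le_two_mul hs.le hu
    refine ⟨hsum, ?_⟩
    rw [if_neg hgt.not_gt, if_neg hgt.ne', mul_one]
    exact hle.trans (mul_le_mul_of_nonneg_left
      ((summable_thetaTerm hu _).tsum_le_tsum (thetaTerm_anti hu.le) hζ) zero_le_two)
end

section
/- For every a ∈ (0,1) there exist constants 0 < c ≤ C such that for all ν ∈ (0,1) and all h ∈ (0,1]: c · ν^{a−1} h^{a} ≤ Σ_{l₁,l₂ ≥ 1} (l₁²+l₂²)^{−a} · min(1/(ν(l₁²+l₂²)), h) ≤ C · ν^{a−1} h^{a}. -/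
/-!
With `T = (ν h)⁻¹` the summand is `h · φ_T(l₁² + l₂²)` where `φ_T(r) = r^{-a} min(T/r, 1)`, and
`ν^{a-1} h^a = h · T^{1-a}`, so it suffices to show `∑ φ_T(l₁² + l₂²) ≍ T^{1-a}` for `T ≥ 1`.

Upper bound: `φ_T` is antitone and `φ_T(x²) = φ_{√T}(x)²`, so `φ_T(x² + y²)` is at most the
geometric mean `φ_{√T}(x) φ_{√T}(y)` of `φ_T(x²)` and `φ_T(y²)`. The double sum is thus bounded by
the square of the one-dimensional sum `∑ₙ φ_s(n)`, `s = √T`, which is `O(s^{1-a})`: split it at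
`n = ⌊s⌋`, bound the head `∑ n^{-a}` by telescoping the concave power `n^{1-a}`, and the tail
`s ∑ n^{-1-a}` by an integral.

Lower bound: the `⌊√T⌋² ≥ T/4` lattice points of `[1, √T]²` each contribute at least `T^{-a}/4`.
-/

open Real Finset Set

lemma mul_rpow_sub_one_le_rpow_sub_rpow {p x : ℝ} (hp₀ : 0 ≤ p) (hp₁ : p ≤ 1) (hx : 1 ≤ x) :
    p * x ^ (p - 1) ≤ x ^ p - (x - 1) ^ p := by
  have hx₀ : 0 < x := by linarith
  have hinv : x⁻¹ ≤ 1 := inv_le_one_of_one_le₀ hx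
  have bernoulli := rpow_one_add_le_one_add_mul_self (s := -x⁻¹) (by linarith) hp₀ hp₁
  have hsub : x - 1 = x * (1 + -x⁻¹) := by field_simp; ring
  rw [hsub, mul_rpow hx₀.le (by linarith), rpow_sub_one hx₀.ne']
  have := mul_le_mul_of_nonneg_left bernoulli (rpow_nonneg hx₀.le p)
  have e : x ^ p * (1 + p * -x⁻¹) = x ^ p - p * (x ^ p / x) := by field_simp; ring
  linarith

/-- The `n = 0` term is `0 ^ (-b) = 0`. -/
lemma sum_range_rpow_neg_le {b : ℝ} (hb₀ : 0 < b) (hb₁ : b < 1) (N : ℕ) :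
    ∑ n ∈ range (N + 1), (n : ℝ) ^ (-b) ≤ (N : ℝ) ^ (1 - b) / (1 - b) := by
  induction N with
  | zero => simp [zero_rpow (neg_ne_zero.mpr hb₀.ne'), zero_rpow (sub_ne_zero.mpr hb₁.ne')]
  | succ N ih =>
    have tangent := mul_rpow_sub_one_le_rpow_sub_rpow (p := 1 - b) (x := (N : ℝ) + 1)
      (by linarith) (by linarith) (by linarith [N.cast_nonneg (α := ℝ)])
    rw [show (1 - b - 1) = -b by ring, add_sub_cancel_right] at tangent
    rw [le_div_iff₀ (by linarith)] at ih ⊢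
    rw [sum_range_succ]
    push_cast
    linarith

lemma tsum_nat_add_rpow_le {q : ℝ} (hq : 0 < q) {N : ℕ} (hN : 0 < N) :
    ∑' n : ℕ, ((n + N + 1 : ℕ) : ℝ) ^ (-1 - q) ≤ (N : ℝ) ^ (-q) / q := by
  have hN' : (0 : ℝ) < N := by exact_mod_cast hN
  have hexp : -1 - q < -1 := by linarith
  have anti : AntitoneOn (fun t : ℝ => t ^ (-1 - q)) (Ici (N : ℝ)) := fun s hs t _ hst =>
    rpow_le_rpow_of_nonpos (hN'.trans_le hs) hst (by linarith)
  have := anti.tsum_comp_add_le_integral N (integrableOn_Ioi_rpow_of_lt hexp hN')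
    fun t ht => rpow_nonneg (hN'.trans ht).le _
  rwa [integral_Ioi_rpow_of_lt hexp hN', show -1 - q + 1 = -q by ring, neg_div_neg_eq] at this

noncomputable def cutoffPow (a s t : ℝ) : ℝ := t ^ (-a) * min (s / t) 1

section cutoffPow

variable {a s t : ℝ}

lemma cutoffPow_nonneg (hs : 0 ≤ s) (ht : 0 ≤ t) : 0 ≤ cutoffPow a s t :=
  mul_nonneg (rpow_nonneg ht _) (le_min (div_nonneg hs ht) zero_le_one)

lemma cutoffPow_le_rpow (ht : 0 ≤ t) : cutoffPow a s t ≤ t ^ (-a) :=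
  mul_le_of_le_one_right (rpow_nonneg ht _) (min_le_right _ _)

lemma cutoffPow_le_mul_rpow (hs : 0 ≤ s) (ht : 0 ≤ t) : cutoffPow a s t ≤ s * t ^ (-1 - a) := by
  rcases ht.eq_or_lt with rfl | ht
  · simp [cutoffPow, mul_nonneg hs (rpow_nonneg le_rfl _)]
  calc cutoffPow a s t ≤ t ^ (-a) * (s / t) :=
        mul_le_mul_of_nonneg_left (min_le_left _ _) (rpow_nonneg ht.le _)
    _ = s * t ^ (-1 - a) := by rw [show -1 - a = -a - 1 by ring, rpow_sub_one ht.ne']; ring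

lemma cutoffPow_antitoneOn (ha : 0 ≤ a) (hs : 0 ≤ s) : AntitoneOn (cutoffPow a s) (Ioi 0) := by
  intro t ht u _ htu
  exact mul_le_mul (rpow_le_rpow_of_nonpos ht htu (by linarith))
    (min_le_min_right 1 (div_le_div_of_nonneg_left hs ht htu))
    (le_min (div_nonneg hs (ht.out.trans_le htu).le) zero_le_one) (rpow_nonneg ht.out.le _)

lemma cutoffPow_sq (hs : 0 ≤ s) (ht : 0 ≤ t) :
    cutoffPow a (s ^ 2) (t ^ 2) = cutoffPow a s t ^ 2 := by
  have hmin : min (s ^ 2 / t ^ 2) 1 = min (s / t) 1 ^ 2 := by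
    rw [← div_pow]
    rcases le_total (s / t) 1 with h | h
    · rw [min_eq_left h, min_eq_left (pow_le_one₀ (div_nonneg hs ht) h)]
    · rw [min_eq_right h, min_eq_right (one_le_pow₀ h), one_pow]
  rw [cutoffPow, cutoffPow, hmin, mul_pow, rpow_pow_comm ht]

lemma cutoffPow_add_sq_le (ha : 0 ≤ a) (hs : 0 ≤ s) {x y : ℝ} (hx : 0 < x) (hy : 0 < y) :
    cutoffPow a (s ^ 2) (x ^ 2 + y ^ 2) ≤ cutoffPow a s x * cutoffPow a s y := by
  have anti := cutoffPow_antitoneOn ha (sq_nonneg s)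
  have hxy : (0 : ℝ) < x ^ 2 + y ^ 2 := by positivity
  have le_x : cutoffPow a (s ^ 2) (x ^ 2 + y ^ 2) ≤ cutoffPow a s x ^ 2 := by
    rw [← cutoffPow_sq hs hx.le]
    exact anti (by positivity : (0 : ℝ) < x ^ 2) hxy (by nlinarith)
  have le_y : cutoffPow a (s ^ 2) (x ^ 2 + y ^ 2) ≤ cutoffPow a s y ^ 2 := by
    rw [← cutoffPow_sq hs hy.le]
    exact anti (by positivity : (0 : ℝ) < y ^ 2) hxy (by nlinarith)
  have hm := cutoffPow_nonneg (a := a) (sq_nonneg s) hxy.le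
  refine (pow_le_pow_iff_left₀ hm (mul_nonneg (cutoffPow_nonneg hs hx.le)
    (cutoffPow_nonneg hs hy.le)) two_ne_zero).mp ?_
  rw [sq, mul_pow]
  exact mul_le_mul le_x le_y hm (sq_nonneg _)

lemma summable_cutoffPow_nat (ha : 0 < a) (hs : 0 ≤ s) :
    Summable fun n : ℕ => cutoffPow a s n :=
  ((summable_nat_rpow.mpr (by linarith : -1 - a < -1)).mul_left s).of_nonneg_of_le
    (fun n => cutoffPow_nonneg hs n.cast_nonneg) (fun n => cutoffPow_le_mul_rpow hs n.cast_nonneg)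

lemma summable_cutoffPow_pnat (ha : 0 < a) (hs : 0 ≤ s) :
    Summable fun m : ℕ+ => cutoffPow a s (m : ℕ) :=
  summable_pnat_iff_summable_nat.mpr (summable_cutoffPow_nat ha hs)

lemma sum_range_cutoffPow_le (ha : 0 < a) (ha₁ : a < 1) {N : ℕ} (hNs : (N : ℝ) ≤ s) :
    ∑ n ∈ range (N + 1), cutoffPow a s n ≤ s ^ (1 - a) / (1 - a) := calc
  _ ≤ ∑ n ∈ range (N + 1), (n : ℝ) ^ (-a) :=
    sum_le_sum fun n _ => cutoffPow_le_rpow n.cast_nonneg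
  _ ≤ (N : ℝ) ^ (1 - a) / (1 - a) := sum_range_rpow_neg_le ha ha₁ N
  _ ≤ s ^ (1 - a) / (1 - a) := by gcongr

lemma tsum_cutoffPow_nat_add_le (ha : 0 < a) (ha₁ : a ≤ 1) (hs : 0 < s) {N : ℕ} (hN : 0 < N)
    (hsN : s / 2 ≤ N) :
    ∑' n : ℕ, cutoffPow a s (n + (N + 1) : ℕ) ≤ 2 / a * s ^ (1 - a) := calc
  _ ≤ ∑' n : ℕ, s * ((n + N + 1 : ℕ) : ℝ) ^ (-1 - a) := by
    have hf : Summable fun n : ℕ => cutoffPow a s (n + (N + 1) : ℕ) :=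
      (summable_nat_add_iff (f := fun n : ℕ => cutoffPow a s n) (N + 1)).mpr
        (summable_cutoffPow_nat ha hs.le)
    have hg : Summable fun n : ℕ => ((n + N + 1 : ℕ) : ℝ) ^ (-1 - a) :=
      (summable_nat_add_iff (f := fun n : ℕ => (n : ℝ) ^ (-1 - a)) (N + 1)).mpr
        (summable_nat_rpow.mpr (by linarith))
    exact hf.tsum_le_tsum (fun n => cutoffPow_le_mul_rpow hs.le (Nat.cast_nonneg _))
      (hg.mul_left s)
  _ = s * ∑' n : ℕ, ((n + N + 1 : ℕ) : ℝ) ^ (-1 - a) := tsum_mul_left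
  _ ≤ s * ((N : ℝ) ^ (-a) / a) := by gcongr; exact tsum_nat_add_rpow_le ha hN
  _ ≤ s * ((s / 2) ^ (-a) / a) := by
    have := rpow_le_rpow_of_nonpos (by linarith : (0 : ℝ) < s / 2) hsN (by linarith : -a ≤ 0)
    gcongr
  _ = 2 ^ a / a * s ^ (1 - a) := by
    rw [div_rpow hs.le zero_le_two, rpow_neg zero_le_two, rpow_sub hs, rpow_neg hs.le, rpow_one]
    field_simp
  _ ≤ 2 / a * s ^ (1 - a) := by
    gcongr
    simpa using rpow_le_rpow_of_exponent_le one_le_two ha₁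

lemma tsum_cutoffPow_nat_le (ha : 0 < a) (ha₁ : a < 1) (hs : 1 ≤ s) :
    ∑' n : ℕ, cutoffPow a s n ≤ (1 / (1 - a) + 2 / a) * s ^ (1 - a) := by
  obtain ⟨N, hNdef⟩ : ∃ N, N = ⌊s⌋₊ := ⟨_, rfl⟩
  have hN : 0 < N := hNdef ▸ Nat.floor_pos.mpr hs
  have hsN : s / 2 ≤ N := by
    have := hNdef ▸ Nat.lt_floor_add_one s
    have : (1 : ℝ) ≤ N := by exact_mod_cast hN
    linarith
  rw [← (summable_cutoffPow_nat ha (by linarith)).sum_add_tsum_nat_add (N + 1)]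
  calc _ ≤ s ^ (1 - a) / (1 - a) + 2 / a * s ^ (1 - a) :=
        add_le_add (sum_range_cutoffPow_le ha ha₁ (hNdef ▸ Nat.floor_le (by linarith)))
          (tsum_cutoffPow_nat_add_le ha ha₁.le (by linarith) hN hsN)
    _ = _ := by ring

end cutoffPow

noncomputable def latticeNormSq (l : ℕ+ × ℕ+) : ℝ := ((l.1 : ℕ) : ℝ) ^ 2 + ((l.2 : ℕ) : ℝ) ^ 2

section latticeNormSq

variable {a T : ℝ}

lemma latticeNormSq_pos (l : ℕ+ × ℕ+) : 0 < latticeNormSq l := by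
  unfold latticeNormSq; positivity

lemma cutoffPow_latticeNormSq_le (ha : 0 ≤ a) (hT : 0 ≤ T) (l : ℕ+ × ℕ+) :
    cutoffPow a T (latticeNormSq l) ≤ cutoffPow a √T (l.1 : ℕ) * cutoffPow a √T (l.2 : ℕ) := by
  have := cutoffPow_add_sq_le ha (sqrt_nonneg T) (x := ((l.1 : ℕ) : ℝ)) (y := ((l.2 : ℕ) : ℝ))
    (by positivity) (by positivity)
  rwa [sq_sqrt hT] at this

lemma summable_cutoffPow_latticeNormSq (ha : 0 < a) (hT : 0 ≤ T) :
    Summable fun l => cutoffPow a T (latticeNormSq l) := by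
  have hg := summable_cutoffPow_pnat ha (sqrt_nonneg T)
  have hg₀ : 0 ≤ fun m : ℕ+ => cutoffPow a √T (m : ℕ) :=
    fun m => cutoffPow_nonneg (sqrt_nonneg T) (Nat.cast_nonneg _)
  exact (hg.mul_of_nonneg hg hg₀ hg₀).of_nonneg_of_le
    (fun l => cutoffPow_nonneg hT (latticeNormSq_pos l).le)
    (cutoffPow_latticeNormSq_le ha.le hT)

lemma tsum_cutoffPow_latticeNormSq_le (ha : 0 < a) (ha₁ : a < 1) (hT : 1 ≤ T) :
    ∑' l, cutoffPow a T (latticeNormSq l) ≤ (1 / (1 - a) + 2 / a) ^ 2 * T ^ (1 - a) := by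
  have hg := summable_cutoffPow_pnat ha (sqrt_nonneg T)
  have hg₀ : 0 ≤ fun m : ℕ+ => cutoffPow a √T (m : ℕ) :=
    fun m => cutoffPow_nonneg (sqrt_nonneg T) (Nat.cast_nonneg _)
  have h1D : ∑' m : ℕ+, cutoffPow a √T (m : ℕ) ≤ (1 / (1 - a) + 2 / a) * √T ^ (1 - a) := by
    rw [tsum_pnat_eq_tsum_of_eq_zero (f := fun n : ℕ => cutoffPow a √T n) (by simp [cutoffPow])]
    exact tsum_cutoffPow_nat_le ha ha₁ (one_le_sqrt.mpr hT)
  calc ∑' l, cutoffPow a T (latticeNormSq l)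
      ≤ ∑' l : ℕ+ × ℕ+, cutoffPow a √T (l.1 : ℕ) * cutoffPow a √T (l.2 : ℕ) :=
        (summable_cutoffPow_latticeNormSq ha (by linarith)).tsum_le_tsum
          (cutoffPow_latticeNormSq_le ha.le (by linarith)) (hg.mul_of_nonneg hg hg₀ hg₀)
    _ = (∑' m : ℕ+, cutoffPow a √T (m : ℕ)) * ∑' m : ℕ+, cutoffPow a √T (m : ℕ) :=
        (hg.tsum_mul_tsum hg (hg.mul_of_nonneg hg hg₀ hg₀)).symm
    _ ≤ ((1 / (1 - a) + 2 / a) * √T ^ (1 - a)) * ((1 / (1 - a) + 2 / a) * √T ^ (1 - a)) :=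
        mul_le_mul h1D h1D (tsum_nonneg hg₀) (le_trans (tsum_nonneg hg₀) h1D)
    _ = (1 / (1 - a) + 2 / a) ^ 2 * T ^ (1 - a) := by
        rw [mul_mul_mul_comm, ← mul_rpow (sqrt_nonneg T) (sqrt_nonneg T),
          mul_self_sqrt (by linarith)]
        ring

lemma latticeNormSq_le_two_mul (hT : 0 ≤ T) {l : ℕ+ × ℕ+} (h₁ : ((l.1 : ℕ) : ℝ) ≤ √T)
    (h₂ : ((l.2 : ℕ) : ℝ) ≤ √T) : latticeNormSq l ≤ 2 * T := by
  have h₁' := pow_le_pow_left₀ (Nat.cast_nonneg _) h₁ 2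
  have h₂' := pow_le_pow_left₀ (Nat.cast_nonneg _) h₂ 2
  rw [sq_sqrt hT] at h₁' h₂'
  unfold latticeNormSq
  linarith

lemma le_cutoffPow_latticeNormSq (ha : 0 ≤ a) (ha₁ : a ≤ 1) (hT : 0 < T) {l : ℕ+ × ℕ+}
    (hl : latticeNormSq l ≤ 2 * T) : T ^ (-a) / 4 ≤ cutoffPow a T (latticeNormSq l) := calc
  T ^ (-a) / 4 ≤ (2 * T) ^ (-a) / 2 := by
    rw [mul_rpow zero_le_two hT.le]
    have : (1 : ℝ) / 2 ≤ 2 ^ (-a) := by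
      simpa [rpow_neg_one] using rpow_le_rpow_of_exponent_le one_le_two (by linarith : -1 ≤ -a)
    nlinarith [rpow_nonneg hT.le (-a)]
  _ = cutoffPow a T (2 * T) := by
    rw [cutoffPow, div_mul_cancel_right₀ hT.ne', min_eq_left (by norm_num)]
    ring
  _ ≤ cutoffPow a T (latticeNormSq l) :=
    cutoffPow_antitoneOn ha hT.le (latticeNormSq_pos l) (by simp; linarith) hl

lemma le_tsum_cutoffPow_latticeNormSq (ha : 0 < a) (ha₁ : a ≤ 1) (hT : 1 ≤ T) :
    T ^ (1 - a) / 16 ≤ ∑' l, cutoffPow a T (latticeNormSq l) := by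
  obtain ⟨K, hKdef⟩ : ∃ K, K = ⌊√T⌋₊ := ⟨_, rfl⟩
  have hK : 0 < K := hKdef ▸ Nat.floor_pos.mpr (one_le_sqrt.mpr hT)
  have hK_le : (K : ℝ) ≤ √T := hKdef ▸ Nat.floor_le (sqrt_nonneg T)
  have hK_ge : √T / 2 ≤ K := by
    have := hKdef ▸ Nat.lt_floor_add_one √T
    have : (1 : ℝ) ≤ K := by exact_mod_cast hK
    linarith
  set box := Finset.Icc 1 (K.toPNat hK) ×ˢ Finset.Icc 1 (K.toPNat hK)
  have hcoord : ∀ m ∈ Finset.Icc 1 (K.toPNat hK), ((m : ℕ) : ℝ) ≤ √T := fun m hm =>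
    le_trans (by exact_mod_cast PNat.coe_le_coe _ _ |>.mpr (mem_Icc.mp hm).2) hK_le
  have hbox : ∀ l ∈ box, T ^ (-a) / 4 ≤ cutoffPow a T (latticeNormSq l) := fun l hl =>
    le_cutoffPow_latticeNormSq ha.le ha₁ (by linarith) <| latticeNormSq_le_two_mul (by linarith)
      (hcoord _ (mem_product.mp hl).1) (hcoord _ (mem_product.mp hl).2)
  have hcard : (box.card : ℝ) = K * K := by
    rw [card_product, PNat.card_Icc]
    change (((K + 1 - 1) * (K + 1 - 1) : ℕ) : ℝ) = _
    simp
  have hKK : T / 4 ≤ K * K := by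
    have := mul_self_le_mul_self (by positivity) hK_ge
    rw [div_mul_div_comm, mul_self_sqrt (by linarith)] at this
    linarith
  calc T ^ (1 - a) / 16 = T / 4 * (T ^ (-a) / 4) := by
        rw [sub_eq_add_neg, rpow_add (by linarith), rpow_one]; ring
    _ ≤ box.card * (T ^ (-a) / 4) := by
        rw [hcard]; gcongr
    _ ≤ ∑ l ∈ box, cutoffPow a T (latticeNormSq l) := by
        simpa using card_nsmul_le_sum box _ _ hbox
    _ ≤ ∑' l, cutoffPow a T (latticeNormSq l) :=
        (summable_cutoffPow_latticeNormSq ha (by linarith)).sum_le_tsum box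
          fun l _ => cutoffPow_nonneg (by linarith) (latticeNormSq_pos l).le

end latticeNormSq

lemma rpow_neg_mul_min_eq {a ν h r : ℝ} (hh : 0 < h) :
    r ^ (-a) * min (1 / (ν * r)) h = h * cutoffPow a (ν * h)⁻¹ r := by
  rw [cutoffPow, mul_left_comm, mul_min_of_nonneg _ _ hh.le, mul_one, one_div, mul_inv,
    div_eq_mul_inv, mul_inv, mul_comm ν⁻¹ h⁻¹, mul_assoc, mul_inv_cancel_left₀ hh.ne']

lemma mul_inv_mul_rpow_eq {a ν h : ℝ} (hν : 0 < ν) (hh : 0 < h) :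
    h * ((ν * h)⁻¹) ^ (1 - a) = ν ^ (a - 1) * h ^ a := by
  rw [inv_rpow (by positivity), ← rpow_neg (by positivity), neg_sub, mul_rpow hν.le hh.le,
    rpow_sub_one hh.ne']
  field_simp

theorem stmt13 (a : ℝ) (ha : 0 < a) (ha1 : a < 1) :
    ∃ c C : ℝ, 0 < c ∧ c ≤ C ∧ ∀ ν h : ℝ, 0 < ν → ν < 1 → 0 < h → h ≤ 1 →
      (Summable fun l : ℕ+ × ℕ+ =>
        (((l.1 : ℕ) : ℝ) ^ 2 + ((l.2 : ℕ) : ℝ) ^ 2) ^ (-a) *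
          min (1 / (ν * (((l.1 : ℕ) : ℝ) ^ 2 + ((l.2 : ℕ) : ℝ) ^ 2))) h) ∧
      c * (ν ^ (a - 1) * h ^ a)
          ≤ (∑' l : ℕ+ × ℕ+,
              (((l.1 : ℕ) : ℝ) ^ 2 + ((l.2 : ℕ) : ℝ) ^ 2) ^ (-a) *
                min (1 / (ν * (((l.1 : ℕ) : ℝ) ^ 2 + ((l.2 : ℕ) : ℝ) ^ 2))) h) ∧
      (∑' l : ℕ+ × ℕ+,
          (((l.1 : ℕ) : ℝ) ^ 2 + ((l.2 : ℕ) : ℝ) ^ 2) ^ (-a) *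
            min (1 / (ν * (((l.1 : ℕ) : ℝ) ^ 2 + ((l.2 : ℕ) : ℝ) ^ 2))) h)
          ≤ C * (ν ^ (a - 1) * h ^ a) := by
  refine ⟨1 / 16, (1 / (1 - a) + 2 / a) ^ 2, by norm_num, ?_, fun ν h hν hν₁ hh hh₁ => ?_⟩
  · have : 1 ≤ 1 / (1 - a) := by rw [le_div_iff₀ (by linarith)]; linarith
    nlinarith [div_pos two_pos ha]
  have hT : 1 ≤ (ν * h)⁻¹ := one_le_inv₀ (by positivity) |>.mpr (by nlinarith)
  simp only [rpow_neg_mul_min_eq hh]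
  rw [tsum_mul_left, ← mul_inv_mul_rpow_eq hν hh]
  refine ⟨(summable_cutoffPow_latticeNormSq ha (by linarith)).mul_left h, ?_, ?_⟩
  · calc 1 / 16 * (h * (ν * h)⁻¹ ^ (1 - a)) = h * ((ν * h)⁻¹ ^ (1 - a) / 16) := by ring
      _ ≤ _ := mul_le_mul_of_nonneg_left (le_tsum_cutoffPow_latticeNormSq ha ha1.le hT) hh.le
  · calc _ ≤ h * ((1 / (1 - a) + 2 / a) ^ 2 * (ν * h)⁻¹ ^ (1 - a)) :=
          mul_le_mul_of_nonneg_left (tsum_cutoffPow_latticeNormSq_le ha ha1 hT) hh.le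
      _ = _ := by ring
end

section
/- Let b ≥ 1 and a ∈ ℝ with a·b > −1. There exists a constant C > 0, depending only on a and b, such that for all ν > 0 and t ∈ (0,1] with ν t ≤ 1/2: ∫₀^t (−s^{a} log(ν s))^{b} ds ≤ C · t^{1+ab} · (−log(ν t))^{b}. -/
/-!
Put `L = -log (ν t) ≥ log 2` and write `-log (ν s) = L + log (t / s)`. Since `L ≥ 1/2` and
`log y ≤ y ^ ε / ε`, this is at most `(1 + 2/ε) L (t / s) ^ ε`, so the integrand is bounded by
`const · L ^ b · t ^ (ε b) · s ^ (a b - ε b)`. Choosing `ε b = (1 + a b) / 2` makes the exponent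
of `s` larger than `-1`, and integrating the power of `s` gives the factor `t ^ (1 + a b)`.
-/

open MeasureTheory intervalIntegral Set Real

lemma one_add_two_mul_log_le_mul_rpow {y ε : ℝ} (hy : 1 ≤ y) (hε : 0 < ε) :
    1 + 2 * log y ≤ (1 + 2 / ε) * y ^ ε := by
  have hone : 1 ≤ y ^ ε := one_le_rpow hy hε.le
  have hlog : log y ≤ y ^ ε / ε := log_le_rpow_div (by linarith) hε
  have : 2 * log y ≤ 2 / ε * y ^ ε := by
    rw [div_mul_eq_mul_div, mul_div_assoc]; linarith
  linarith

lemma add_log_le_mul_rpow {L y ε : ℝ} (hL : 1 / 2 ≤ L) (hy : 1 ≤ y) (hε : 0 < ε) :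
    L + log y ≤ (1 + 2 / ε) * L * y ^ ε := by
  have hlog : 0 ≤ log y := log_nonneg hy
  calc L + log y ≤ L * (1 + 2 * log y) := by nlinarith
    _ ≤ L * ((1 + 2 / ε) * y ^ ε) := by
      gcongr
      exact one_add_two_mul_log_le_mul_rpow hy hε
    _ = (1 + 2 / ε) * L * y ^ ε := by ring

lemma half_le_neg_log_mul {ν s t : ℝ} (hν : 0 < ν) (hs : 0 < s) (hst : s ≤ t)
    (hνt : ν * t ≤ 1 / 2) : 1 / 2 ≤ -log (ν * s) := by
  have h : log (ν * s) ≤ log (1 / 2) :=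
    log_le_log (by positivity) ((mul_le_mul_of_nonneg_left hst hν.le).trans hνt)
  rw [one_div, log_inv] at h
  linarith [log_two_gt_d9]

lemma neg_log_mul_le_mul_rpow {ν s t ε : ℝ} (hν : 0 < ν) (hs : 0 < s) (hst : s ≤ t)
    (hνt : ν * t ≤ 1 / 2) (hε : 0 < ε) :
    -log (ν * s) ≤ (1 + 2 / ε) * (-log (ν * t)) * (t / s) ^ ε := by
  have ht : 0 < t := hs.trans_le hst
  have hsplit : -log (ν * s) = -log (ν * t) + log (t / s) := by
    rw [log_mul hν.ne' hs.ne', log_mul hν.ne' ht.ne', log_div ht.ne' hs.ne']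
    ring
  rw [hsplit]
  exact add_log_le_mul_rpow (half_le_neg_log_mul hν ht le_rfl hνt) ((one_le_div hs).2 hst) hε

lemma rpow_neg_rpow_mul_log_le {a b ν s t ε : ℝ} (hb : 0 ≤ b) (hν : 0 < ν) (hs : 0 < s)
    (hst : s ≤ t) (hνt : ν * t ≤ 1 / 2) (hε : 0 < ε) :
    (-(s ^ a * log (ν * s))) ^ b ≤
      ((1 + 2 / ε) * (-log (ν * t))) ^ b * t ^ (ε * b) * s ^ (a * b - ε * b) := by
  have ht : 0 < t := hs.trans_le hst
  have hL : 0 ≤ (1 + 2 / ε) * -log (ν * t) :=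
    mul_nonneg (by positivity) (by linarith [half_le_neg_log_mul hν ht le_rfl hνt])
  have hts : 0 ≤ (t / s) ^ ε := rpow_nonneg (div_nonneg ht.le hs.le) ε
  calc (-(s ^ a * log (ν * s))) ^ b = (s ^ a * -log (ν * s)) ^ b := by rw [neg_mul_eq_mul_neg]
    _ ≤ (s ^ a * ((1 + 2 / ε) * (-log (ν * t)) * (t / s) ^ ε)) ^ b := by
      have := half_le_neg_log_mul hν hs hst hνt
      refine rpow_le_rpow (mul_nonneg (rpow_nonneg hs.le a) (by linarith)) ?_ hb
      exact mul_le_mul_of_nonneg_left (neg_log_mul_le_mul_rpow hν hs hst hνt hε)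
        (rpow_nonneg hs.le a)
    _ = ((1 + 2 / ε) * (-log (ν * t))) ^ b * t ^ (ε * b) * s ^ (a * b - ε * b) := by
      rw [mul_left_comm, mul_rpow hL (mul_nonneg (rpow_nonneg hs.le a) hts),
        mul_rpow (rpow_nonneg hs.le a) hts, ← rpow_mul hs.le,
        ← rpow_mul (div_nonneg ht.le hs.le), div_rpow ht.le hs.le, rpow_sub hs]
      ring

/-- No measurability of `f` is needed: a non-integrable `f` has integral `0`. -/
lemma intervalIntegral_le_of_le_mul_rpow {f : ℝ → ℝ} {t d M : ℝ} (ht : 0 ≤ t) (hd : 0 < d)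
    (hf₀ : ∀ s ∈ Ioc 0 t, 0 ≤ f s) (hf : ∀ s ∈ Ioc 0 t, f s ≤ M * s ^ (d - 1)) :
    ∫ s in (0 : ℝ)..t, f s ≤ M * (t ^ d / d) := by
  have hr : -1 < d - 1 := by linarith
  have hint : IntegrableOn (fun s => M * s ^ (d - 1)) (Ioc 0 t) :=
    ((intervalIntegrable_rpow' hr).const_mul M).1
  calc ∫ s in (0 : ℝ)..t, f s ≤ ∫ s in (0 : ℝ)..t, M * s ^ (d - 1) := by
        rw [integral_of_le ht, integral_of_le ht]
        exact integral_mono_of_nonneg (ae_restrict_of_forall_mem measurableSet_Ioc hf₀) hint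
          (ae_restrict_of_forall_mem measurableSet_Ioc hf)
    _ = M * (t ^ d / d) := by
      rw [intervalIntegral.integral_const_mul, integral_rpow (Or.inl hr), sub_add_cancel,
        zero_rpow hd.ne', sub_zero]

theorem stmt17 (a b : ℝ) (hb : 1 ≤ b) (hab : -1 < a * b) :
    ∃ C : ℝ, 0 < C ∧ ∀ ν t : ℝ, 0 < ν → 0 < t → t ≤ 1 → ν * t ≤ 1 / 2 →
      (∫ s in (0:ℝ)..t, (-(s ^ a * Real.log (ν * s))) ^ b)
        ≤ C * t ^ (1 + a * b) * (-Real.log (ν * t)) ^ b := by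
  have hb₀ : 0 < b := by linarith
  set d := (1 + a * b) / 2 with hd_def
  have hd : 0 < d := by rw [hd_def]; linarith
  set ε := d / b
  have hε : 0 < ε := div_pos hd hb₀
  have hεb : ε * b = d := div_mul_cancel₀ d hb₀.ne'
  refine ⟨(1 + 2 / ε) ^ b / d, div_pos (rpow_pos_of_pos (by positivity) b) hd,
    fun ν t hν ht _ hνt => ?_⟩
  have hL : 0 ≤ -log (ν * t) := by linarith [half_le_neg_log_mul hν ht le_rfl hνt]
  calc (∫ s in (0:ℝ)..t, (-(s ^ a * log (ν * s))) ^ b)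
      ≤ ((1 + 2 / ε) * (-log (ν * t))) ^ b * t ^ d * (t ^ d / d) := by
        refine intervalIntegral_le_of_le_mul_rpow ht.le hd (fun s hs => ?_) (fun s hs => ?_)
        · have hlogs := half_le_neg_log_mul hν hs.1 hs.2 hνt
          rw [neg_mul_eq_mul_neg]
          exact rpow_nonneg (mul_nonneg (rpow_nonneg hs.1.le a) (by linarith)) b
        · have key := rpow_neg_rpow_mul_log_le (a := a) hb₀.le hν hs.1 hs.2 hνt hε
          rwa [hεb, show a * b - d = d - 1 by ring] at key
    _ = (1 + 2 / ε) ^ b / d * t ^ (1 + a * b) * (-log (ν * t)) ^ b := by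
      rw [mul_rpow (by positivity : (0:ℝ) ≤ 1 + 2 / ε) hL, show 1 + a * b = d + d by ring,
        rpow_add ht]
      ring
end
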